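/- Let X^n be uniform on {0,1}^n and Y^n its noiseless copy (δ = 0). For any f : {0,1}^n → {0,1} with P(f=1) = q ≤ 1/2, one has G_s(X^n | f(Y^n)) ≥ 2^{-(n-1)} ∑_{i=1}^{2^{n-1}} i^s, with equality iff q = 1/2 (f balanced). Consequently γ_s(0) = 2^{-s}. -/

import Mathlib

open Finset Filter

/-- The minimal conditional `s`-th guessing moment `G_s(X^n | f(X^n))` in the noiseless case
(`δ = 0`, so `Y^n = X^n`): the infimum over guessing strategies (one ordering of `{0,1}^n`
for each value of the bit `f(X^n)`). -/
noncomputable def GcondNoiseless (s : ℝ) (n : ℕ) (f : (Fin n → Bool) → Bool) : ℝ :=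
  sInf {m : ℝ | ∃ g : Bool → ((Fin n → Bool) ≃ Fin (2 ^ n)),
    m = ∑ x : Fin n → Bool, (2 : ℝ) ^ (-(n : ℝ)) * (((g (f x) x : ℕ) + 1 : ℝ)) ^ s}

/-- The unconditional guessing moment `G_s(X^n)` of a uniform vector on `{0,1}^n`. -/
noncomputable def Gunif (s : ℝ) (n : ℕ) : ℝ :=
  (2 : ℝ) ^ (-(n : ℝ)) * ∑ i ∈ Finset.Icc (1 : ℕ) (2 ^ n), (i : ℝ) ^ s

/-- `P(f(X^n) = 1)` for uniform `X^n`. -/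
noncomputable def bias (n : ℕ) (f : (Fin n → Bool) → Bool) : ℝ :=
  ((Finset.univ.filter fun x : Fin n → Bool => f x = true).card : ℝ) / 2 ^ n

/-!
Given the bit `f(X^n) = b`, an optimal guesser lists the fiber `f⁻¹(b)` first, so with
`S(b) = ∑_{i ≤ b} i^s` and `k = #f⁻¹(1)` the conditional moment is `2^{-n} (S(k) + S(2^n - k))`.
Because `i ↦ i^s` is strictly increasing, `S(m) - S(k) < S(2m - k) - S(m)` for `k < m`: the
balanced split `k = 2^{n-1}` is the unique minimiser. Comparing `S` with `∫ x^s` gives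
`S(b) ~ b^{s+1}/(s+1)`, so the optimal ratio `2 S(2^{n-1}) / S(2^n)` tends to
`2 · 2^{-(s+1)} = 2^{-s}`.
-/

open Topology

section Rearrangement

variable {α β M : Type*} [AddCommMonoid M]

theorem exists_equiv_sum_comp_eq_sum_range [Fintype α] {N : ℕ} (hN : Fintype.card α = N)
    (A : Finset α) (F : ℕ → M) : ∃ e : α ≃ Fin N, ∑ x ∈ A, F (e x) = ∑ j ∈ range #A, F j := by
  classical
  -- extend the ranking `A ≃ Fin #A ⊆ range N` to a bijection `α ≃ range N`
  let r : α → ℕ := fun x => if h : x ∈ A then A.equivFin ⟨x, h⟩ else 0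
  have hr : ∀ x (h : x ∈ A), r x = A.equivFin ⟨x, h⟩ := fun x h => dif_pos h
  obtain ⟨g, hg⟩ := Finset.exists_equiv_extend_of_card_eq (t := range N) (s := A) (f := r)
    (by simpa using hN) (fun y hy => by
      obtain ⟨x, hx, rfl⟩ := mem_image.1 hy
      exact mem_range.2 ((hr x hx ▸ (A.equivFin ⟨x, hx⟩).2).trans_le (hN ▸ card_le_univ A)))
    (fun x hx y hy hxy => by
      simpa using A.equivFin.injective (Fin.ext ((hr x hx).symm.trans (hxy.trans (hr y hy)))))
  let e : α ≃ Fin N := g.trans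
    ((Equiv.subtypeEquivRight fun _ => mem_range).trans Fin.equivSubtype.symm)
  refine ⟨e, ?_⟩
  calc ∑ x ∈ A, F (e x) = ∑ x ∈ A, F (r x) := sum_congr rfl fun x hx => by simp [e, hg x hx]
    _ = ∑ a : A, F (A.equivFin a) := by
      rw [← sum_attach A, univ_eq_attach]; exact sum_congr rfl fun a _ => by rw [hr]
    _ = ∑ j ∈ range #A, F j := by
      rw [A.equivFin.sum_comp (fun j => F j), Fin.sum_univ_eq_sum_range]

variable [PartialOrder M] [IsOrderedAddMonoid M] {F : ℕ → M}

theorem sum_range_card_le_sum_of_monotone (hF : Monotone F) (B : Finset ℕ) :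
    ∑ j ∈ range #B, F j ≤ ∑ j ∈ B, F j := by
  induction B using Finset.induction_on_max with
  | empty => simp
  | insert a B ha ih =>
    have haB : a ∉ B := fun h => lt_irrefl a (ha a h)
    have hcard : #B ≤ a := by simpa using card_le_card fun x hx => mem_range.2 (ha x hx)
    rw [card_insert_of_notMem haB, sum_insert haB, sum_range_succ, add_comm]
    exact add_le_add (hF hcard) ih

theorem sum_range_card_le_sum_comp (hF : Monotone F) {e : α → ℕ} (he : Function.Injective e)
    (C : Finset α) : ∑ j ∈ range #C, F j ≤ ∑ x ∈ C, F (e x) := by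
  classical
  rw [← sum_image he.injOn, ← card_image_of_injective C he]
  exact sum_range_card_le_sum_of_monotone hF _

theorem isLeast_sum_comp_equiv_fiberwise [Fintype α] [Fintype β] [DecidableEq β] {N : ℕ}
    (hN : Fintype.card α = N) (hF : Monotone F) (f : α → β) :
    IsLeast {m | ∃ g : β → α ≃ Fin N, m = ∑ x, F (g (f x) x)}
      (∑ b, ∑ j ∈ range #{x | f x = b}, F j) := by
  have fiberwise : ∀ g : β → α ≃ Fin N,
      ∑ x, F (g (f x) x) = ∑ b, ∑ x with f x = b, F (g b x) := fun g => by
    rw [← sum_fiberwise univ f]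
    exact sum_congr rfl fun b _ => sum_congr rfl fun x hx => by rw [(mem_filter.1 hx).2]
  constructor
  · choose g hg using fun b => exists_equiv_sum_comp_eq_sum_range hN {x | f x = b} F
    exact ⟨g, by rw [fiberwise]; exact sum_congr rfl fun b _ => (hg b).symm⟩
  · rintro m ⟨g, rfl⟩
    rw [fiberwise]
    exact sum_le_sum fun b _ =>
      sum_range_card_le_sum_comp hF (Fin.val_injective.comp (g b).injective) _

end Rearrangement

section BalancedSplit

variable {F : ℕ → ℝ} {k m : ℕ}

theorem two_mul_sum_range_lt_of_lt (hF : StrictMono F) (hkm : k < m) :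
    2 * ∑ j ∈ range m, F j < ∑ j ∈ range k, F j + ∑ j ∈ range (2 * m - k), F j := by
  have hsplit_m := sum_range_add_sum_Ico F hkm.le
  have hsplit_2m := sum_range_add_sum_Ico F (show m ≤ 2 * m - k by omega)
  have : ∑ j ∈ Ico k m, F j < ∑ j ∈ Ico m (2 * m - k), F j := by
    rw [sum_Ico_eq_sum_range, sum_Ico_eq_sum_range, show 2 * m - k - m = m - k by omega]
    exact sum_lt_sum_of_nonempty (nonempty_range_iff.2 (by omega))
      fun j _ => hF (by omega)
  linarith

theorem two_mul_sum_range_lt_of_ne (hF : StrictMono F) (hk : k ≤ 2 * m) (hkm : k ≠ m) :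
    2 * ∑ j ∈ range m, F j < ∑ j ∈ range k, F j + ∑ j ∈ range (2 * m - k), F j := by
  rcases hkm.lt_or_gt with hlt | hgt
  · exact two_mul_sum_range_lt_of_lt hF hlt
  · have h := two_mul_sum_range_lt_of_lt hF (show 2 * m - k < m by omega)
    rwa [Nat.sub_sub_self hk, add_comm] at h

theorem two_mul_sum_range_le (hF : StrictMono F) (hk : k ≤ 2 * m) :
    2 * ∑ j ∈ range m, F j ≤ ∑ j ∈ range k, F j + ∑ j ∈ range (2 * m - k), F j := by
  rcases eq_or_ne k m with rfl | hkm
  · rw [two_mul, show 2 * k - k = k by omega]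
  · exact (two_mul_sum_range_lt_of_ne hF hk hkm).le

theorem sum_range_add_sum_range_sub_eq_iff (hF : StrictMono F) (hk : k ≤ 2 * m) :
    ∑ j ∈ range k, F j + ∑ j ∈ range (2 * m - k), F j = 2 * ∑ j ∈ range m, F j ↔ k = m := by
  refine ⟨fun h => ?_, fun h => ?_⟩
  · by_contra hkm
    exact (two_mul_sum_range_lt_of_ne hF hk hkm).ne' h
  · subst h
    rw [show 2 * k - k = k by omega, two_mul]

end BalancedSplit

noncomputable def powSum (s : ℝ) (b : ℕ) : ℝ := ∑ j ∈ range b, ((j : ℝ) + 1) ^ s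

theorem sum_Icc_rpow_eq_powSum (s : ℝ) (b : ℕ) : ∑ i ∈ Icc 1 b, (i : ℝ) ^ s = powSum s b := by
  rw [powSum, ← Ico_add_one_right_eq_Icc, sum_Ico_eq_sum_range]
  simp [add_comm]

theorem strictMono_natCast_add_one_rpow {s : ℝ} (hs : 0 < s) :
    StrictMono fun j : ℕ => ((j : ℝ) + 1) ^ s := fun i j hij =>
  Real.rpow_lt_rpow (by positivity) (by simpa using hij) hs

theorem monotone_natCast_add_one_rpow {s : ℝ} (hs : 0 ≤ s) :
    Monotone fun j : ℕ => ((j : ℝ) + 1) ^ s := fun i j hij =>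
  Real.rpow_le_rpow (by positivity) (by simpa using hij) hs

theorem powSum_pos (s : ℝ) {b : ℕ} (hb : 0 < b) : 0 < powSum s b :=
  sum_pos (fun _ _ => by positivity) (nonempty_range_iff.2 hb.ne')

theorem rpow_le_mul_powSum {s : ℝ} (hs : 0 ≤ s) (b : ℕ) :
    (b : ℝ) ^ (s + 1) ≤ (s + 1) * powSum s b := by
  have hmono : MonotoneOn (fun x : ℝ => x ^ s) (Set.Icc 0 (0 + b)) :=
    fun x hx y _ hxy => Real.rpow_le_rpow hx.1 hxy hs
  have h := hmono.integral_le_sum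
  rw [integral_rpow (Or.inl (by linarith)), zero_add,
    Real.zero_rpow (by linarith), sub_zero, div_le_iff₀ (by linarith)] at h
  simpa [powSum, mul_comm] using h

theorem mul_powSum_le_rpow {s : ℝ} (hs : 0 ≤ s) (b : ℕ) :
    (s + 1) * powSum s b ≤ ((b : ℝ) + 1) ^ (s + 1) := by
  have hmono : MonotoneOn (fun x : ℝ => x ^ s) (Set.Icc 1 (1 + b)) :=
    fun x hx y _ hxy => Real.rpow_le_rpow (by linarith [hx.1]) hxy hs
  have h := hmono.sum_le_integral
  rw [integral_rpow (Or.inl (by linarith)), Real.one_rpow, le_div_iff₀ (by linarith)] at h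
  simp only [powSum, add_comm (1 : ℝ)] at h ⊢
  linarith

theorem tendsto_powSum_div_rpow {s : ℝ} (hs : 0 ≤ s) :
    Tendsto (fun b : ℕ => powSum s b / (b : ℝ) ^ (s + 1)) atTop (𝓝 (s + 1)⁻¹) := by
  have hupper : Tendsto (fun b : ℕ => (s + 1)⁻¹ * (((b : ℝ) + 1) / b) ^ (s + 1)) atTop
      (𝓝 (s + 1)⁻¹) := by
    have h := tendsto_add_mul_div_add_mul_atTop_nhds (1 : ℝ) 0 1 one_ne_zero
    simp only [one_mul, zero_add, div_one, add_comm (1 : ℝ)] at h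
    simpa using (h.rpow_const (Or.inl one_ne_zero) (p := s + 1)).const_mul (s + 1)⁻¹
  refine tendsto_of_tendsto_of_tendsto_of_le_of_le' tendsto_const_nhds hupper ?_ ?_
  all_goals
    filter_upwards [eventually_gt_atTop 0] with b hb
    have hbp : (0 : ℝ) < (b : ℝ) ^ (s + 1) := by positivity
  · rw [le_div_iff₀ hbp, inv_mul_eq_div, div_le_iff₀ (by linarith)]
    linarith [rpow_le_mul_powSum hs b]
  · rw [Real.div_rpow (by positivity) (by positivity), div_le_iff₀ hbp, mul_assoc,
      div_mul_cancel₀ _ hbp.ne', inv_mul_eq_div, le_div_iff₀ (by linarith), mul_comm]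
    exact mul_powSum_le_rpow hs b

theorem tendsto_two_mul_powSum_div_powSum_two_mul {s : ℝ} (hs : 0 ≤ s) :
    Tendsto (fun b : ℕ => 2 * powSum s b / powSum s (2 * b)) atTop (𝓝 ((2 : ℝ) ^ (-s))) := by
  have h2b : Tendsto (fun b : ℕ => 2 * b) atTop atTop :=
    tendsto_atTop_mono (fun b => by simp only [id]; omega) tendsto_id
  have hlim := ((tendsto_powSum_div_rpow hs).div ((tendsto_powSum_div_rpow hs).comp h2b)
    (by positivity)).const_mul ((2 : ℝ) ^ (-s))
  rw [div_self (by positivity), mul_one] at hlim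
  refine hlim.congr' ?_
  filter_upwards [eventually_gt_atTop 0] with b hb
  have hP : 0 < powSum s (2 * b) := powSum_pos s (by omega)
  simp only [Pi.div_apply, Function.comp_apply, Nat.cast_mul, Nat.cast_ofNat]
  rw [Real.mul_rpow (by norm_num) (by positivity), Real.rpow_add_one two_ne_zero,
    Real.rpow_neg zero_le_two]
  field_simp

theorem exists_card_filter_eq_true {α : Type*} [Fintype α] {k : ℕ} (hk : k ≤ Fintype.card α) :
    ∃ f : α → Bool, #{x | f x = true} = k := by
  classical
  obtain ⟨A, -, hA⟩ := exists_subset_card_eq (s := univ) hk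
  exact ⟨fun x => decide (x ∈ A), by simpa using hA⟩

theorem gunif_eq (s : ℝ) (n : ℕ) : Gunif s n = (2 : ℝ) ^ (-(n : ℝ)) * powSum s (2 ^ n) := by
  rw [Gunif, sum_Icc_rpow_eq_powSum]

section Guessing

variable {s : ℝ} {n : ℕ}

theorem card_filter_eq_true_le (f : (Fin n → Bool) → Bool) : #{x | f x = true} ≤ 2 ^ n :=
  (card_filter_le _ _).trans (by simp)

theorem gcondNoiseless_eq (hs : 0 ≤ s) (f : (Fin n → Bool) → Bool) :
    GcondNoiseless s n f = (2 : ℝ) ^ (-(n : ℝ)) *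
      (powSum s #{x | f x = true} + powSum s (2 ^ n - #{x | f x = true})) := by
  have hfalse : #{x | f x = false} = 2 ^ n - #{x | f x = true} := by
    have h := card_filter_add_card_filter_not (s := univ) fun x => f x = true
    simp only [Bool.not_eq_true, card_univ, Fintype.card_pi, Fintype.card_bool, prod_const,
      Fintype.card_fin] at h
    omega
  have hF : Monotone fun j : ℕ => (2 : ℝ) ^ (-(n : ℝ)) * ((j : ℝ) + 1) ^ s :=
    (monotone_natCast_add_one_rpow hs).const_mul (by positivity)
  rw [GcondNoiseless, (isLeast_sum_comp_equiv_fiberwise (by simp) hF f).csInf_eq,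
    Fintype.sum_bool, hfalse, powSum, powSum, mul_add, mul_sum, mul_sum]

theorem bias_eq_half_iff (hn : n ≠ 0) (f : (Fin n → Bool) → Bool) :
    bias n f = 1 / 2 ↔ #{x | f x = true} = 2 ^ (n - 1) := by
  rw [bias, ← mul_pow_sub_one hn (2 : ℝ), div_eq_iff (by positivity), one_div,
    inv_mul_cancel_left₀ two_ne_zero]
  norm_cast

theorem isLeast_gcondNoiseless_div_gunif (hs : 0 < s) (hn : n ≠ 0) :
    IsLeast {r | ∃ f : (Fin n → Bool) → Bool, r = GcondNoiseless s n f / Gunif s n}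
      (2 * powSum s (2 ^ (n - 1)) / powSum s (2 * 2 ^ (n - 1))) := by
  have hratio : ∀ f : (Fin n → Bool) → Bool, GcondNoiseless s n f / Gunif s n =
      (powSum s #{x | f x = true} + powSum s (2 * 2 ^ (n - 1) - #{x | f x = true})) /
        powSum s (2 * 2 ^ (n - 1)) := fun f => by
    rw [gcondNoiseless_eq hs.le, gunif_eq, mul_div_mul_left _ _ (by positivity),
      mul_pow_sub_one hn]
  constructor
  · obtain ⟨f, hf⟩ := exists_card_filter_eq_true (α := Fin n → Bool) (k := 2 ^ (n - 1))
      (by simpa using Nat.pow_le_pow_right two_pos (n.sub_le 1))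
    refine ⟨f, ?_⟩
    rw [hratio, hf, show 2 * 2 ^ (n - 1) - 2 ^ (n - 1) = 2 ^ (n - 1) by omega, two_mul]
  · rintro _ ⟨f, rfl⟩
    rw [hratio]
    refine div_le_div_of_nonneg_right ?_ (powSum_pos s (by positivity)).le
    exact two_mul_sum_range_le (strictMono_natCast_add_one_rpow hs)
      ((card_filter_eq_true_le f).trans_eq (mul_pow_sub_one hn 2).symm)

end Guessing

/-- In the noiseless case, any `f` with `P(f=1) = q ≤ 1/2` satisfies
`G_s(X^n|f(X^n)) ≥ 2^{-(n-1)} ∑_{i=1}^{2^{n-1}} i^s`, with equality iff `q = 1/2`;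
consequently `γ_s(0) = 2^{-s}`. -/
theorem noiseless_balanced_optimal (s : ℝ) (hs : 0 < s) :
    (∀ n : ℕ, 1 ≤ n → ∀ f : (Fin n → Bool) → Bool, bias n f ≤ 1 / 2 →
      ((2 : ℝ) ^ (-((n : ℝ) - 1)) * ∑ i ∈ Finset.Icc (1 : ℕ) (2 ^ (n - 1)), (i : ℝ) ^ s) ≤
          GcondNoiseless s n f ∧
        (GcondNoiseless s n f =
            (2 : ℝ) ^ (-((n : ℝ) - 1)) * ∑ i ∈ Finset.Icc (1 : ℕ) (2 ^ (n - 1)), (i : ℝ) ^ s ↔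
          bias n f = 1 / 2)) ∧
    Tendsto (fun n : ℕ =>
        sInf {r : ℝ | ∃ f : (Fin n → Bool) → Bool, r = GcondNoiseless s n f / Gunif s n})
      atTop (nhds ((2 : ℝ) ^ (-s))) := by
  constructor
  · intro n hn f _
    have hn0 : n ≠ 0 := by omega
    have hbalanced : (2 : ℝ) ^ (-((n : ℝ) - 1)) * ∑ i ∈ Icc (1 : ℕ) (2 ^ (n - 1)), (i : ℝ) ^ s =
        (2 : ℝ) ^ (-(n : ℝ)) * (2 * powSum s (2 ^ (n - 1))) := by
      rw [sum_Icc_rpow_eq_powSum, show -((n : ℝ) - 1) = -n + 1 by ring,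
        Real.rpow_add_one two_ne_zero]
      ring
    have hk := (card_filter_eq_true_le f).trans_eq (mul_pow_sub_one hn0 2).symm
    have hF := strictMono_natCast_add_one_rpow hs
    rw [hbalanced, gcondNoiseless_eq hs.le, ← mul_pow_sub_one hn0 2, bias_eq_half_iff hn0,
      mul_right_inj' (by positivity)]
    exact ⟨mul_le_mul_of_nonneg_left (two_mul_sum_range_le hF hk) (by positivity),
      sum_range_add_sum_range_sub_eq_iff hF hk⟩
  · have hm : Tendsto (fun n : ℕ => 2 ^ (n - 1)) atTop atTop :=
      (tendsto_pow_atTop_atTop_of_one_lt one_lt_two).comp (tendsto_sub_atTop_nat 1)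
    refine ((tendsto_two_mul_powSum_div_powSum_two_mul hs.le).comp hm).congr' ?_
    filter_upwards [eventually_ne_atTop 0] with n hn
    exact (isLeast_gcondNoiseless_div_gunif hs hn).csInf_eq.symm
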